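/- arXiv:0801.4069 — 5 statements merged into one kernel-verified Lean document; each statement's English description precedes it below -/
import Mathlib

section
/- Let T be a tournament with exactly p acyclic components, of which exactly k are infinite. Then φ_T(n) ≥ p_k(n−p) for every n ≥ p. In particular the growth of φ_T is at least that of a polynomial of degree k−1. -/
universe u v

/-- `r` is a tournament relation on `V`: irreflexive and, for distinct vertices,
exactly one of the two directed edges is present. -/
def IsTournament {V : Type u} (r : V → V → Prop) : Prop :=
  (∀ x, ¬ r x x) ∧ ∀ x y : V, x ≠ y → (r x y ↔ ¬ r y x)

/-- A subset `A` is autonomous in the tournament `r`. -/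
def Autonomous {V : Type u} (r : V → V → Prop) (A : Set V) : Prop :=
  ∀ x ∈ A, ∀ x' ∈ A, ∀ y ∉ A, (r x y ↔ r x' y)

/-- A subset `A` is acyclic: it contains no 3-cycle. -/
def AcyclicSet {V : Type u} (r : V → V → Prop) (A : Set V) : Prop :=
  ¬ ∃ a ∈ A, ∃ b ∈ A, ∃ c ∈ A, r a b ∧ r b c ∧ r c a

/-- The acyclic component of a vertex `x`: the union of all acyclic autonomous
subsets containing `x`. -/
def acyclicComponent {V : Type u} (r : V → V → Prop) (x : V) : Set V :=
  ⋃₀ {A : Set V | x ∈ A ∧ Autonomous r A ∧ AcyclicSet r A}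

/-- `A` is an acyclic component of the tournament `r`. -/
def IsAcyclicComponent {V : Type u} (r : V → V → Prop) (A : Set V) : Prop :=
  ∃ x, A = acyclicComponent r x

/-- A tournament is acyclically indecomposable if every acyclic autonomous subset
has at most one element. -/
def AcyclicallyIndecomposable {V : Type u} (r : V → V → Prop) : Prop :=
  ∀ A : Set V, Autonomous r A → AcyclicSet r A → A.Subsingleton

/-- The type of acyclic components of `r`. -/
def AcComp {V : Type u} (r : V → V → Prop) : Type u :=
  {A : Set V // IsAcyclicComponent r A}

/-- The quotient tournament `Ť` on the set of acyclic components. -/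
def quotRel {V : Type u} (r : V → V → Prop) : AcComp r → AcComp r → Prop :=
  fun A B => A ≠ B ∧ ∃ x ∈ A.val, ∃ y ∈ B.val, r x y

/-- The lexicographical sum of the tournaments `rels i` indexed by the tournament `d`. -/
def lexSumRel {I : Type u} {F : I → Type v} (d : I → I → Prop)
    (rels : ∀ i, F i → F i → Prop) : (Σ i, F i) → (Σ i, F i) → Prop :=
  fun p q => (p.1 ≠ q.1 ∧ d p.1 q.1) ∨
    ∃ h : p.1 = q.1, rels q.1 (cast (congrArg F h) p.2) q.2

/-- The subtournaments induced on the finite sets `s` and `t` are isomorphic. -/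
def InducedIso {V : Type u} (r : V → V → Prop) (s t : Finset V) : Prop :=
  ∃ e : {x // x ∈ s} ≃ {x // x ∈ t},
    ∀ a b : {x // x ∈ s}, r a.val b.val ↔ r (e a).val (e b).val

/-- The profile of a tournament: the number of isomorphism classes of subtournaments
induced on `n`-element subsets of the vertex set. -/
noncomputable def profile {V : Type u} (r : V → V → Prop) (n : ℕ) : ℕ :=
  Nat.card (Quot (fun s t : {w : Finset V // w.card = n} => InducedIso r s.val t.val))

/-- `r` is (isomorphic to) a lexicographical sum of acyclic tournaments indexed by a
finite tournament. -/
def IsFiniteLexSumOfAcyclic {V : Type u} (r : V → V → Prop) : Prop :=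
  ∃ (I : Type) (d : I → I → Prop) (F : I → Type u)
    (rels : ∀ i, F i → F i → Prop),
    Finite I ∧ IsTournament d ∧
    (∀ i, IsTournament (rels i) ∧ AcyclicSet (rels i) Set.univ) ∧
    ∃ e : V ≃ (Σ i, F i), ∀ x y, r x y ↔ lexSumRel d rels (e x) (e y)

/-- A bundled tournament (vertex type together with its edge relation). -/
structure Tour : Type 1 where
  V : Type
  rel : V → V → Prop

/-- `S` is embeddable in the tournament `r`: `S` is isomorphic to a subtournament of `r`. -/
def Tour.EmbedsIn {W : Type u} (S : Tour) (r : W → W → Prop) : Prop :=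
  ∃ f : S.V → W, Function.Injective f ∧ ∀ x y, S.rel x y ↔ r (f x) (f y)

/-- The profile of a bundled tournament. -/
noncomputable def Tour.profile (T : Tour) (n : ℕ) : ℕ := _root_.profile T.rel n

/-- The quotient tournament `Ť` of a bundled tournament, on its acyclic components. -/
def Tour.check (T : Tour) : Tour := ⟨AcComp T.rel, quotRel T.rel⟩

/-- The tournament `C3[C]` for an acyclic tournament `C = (A, lt)`. -/
def c3Rel {A : Type} (lt : A → A → Prop) : A × Fin 3 → A × Fin 3 → Prop :=
  fun p q => lt p.1 q.1 ∨ (p.1 = q.1 ∧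
    ((p.2 = 0 ∧ q.2 = 1) ∨ (p.2 = 1 ∧ q.2 = 2) ∨ (p.2 = 2 ∧ q.2 = 0)))

/-- The tournament `V[C]` for an acyclic tournament `C = (A, lt)`; `none` is the extra vertex. -/
def vRel {A : Type} (lt : A → A → Prop) (p q : Option (A × Fin 2)) : Prop :=
  match p, q with
  | some p, some q => lt p.1 q.1 ∨ (p.1 = q.1 ∧ p.2 = 0 ∧ q.2 = 1)
  | none, some q => q.2 = 0
  | some p, none => p.2 = 1
  | none, none => False

/-- The tournament `T[C]` for an acyclic tournament `C = (A, lt)`. -/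
def tRel {A : Type} (lt : A → A → Prop) : A × Fin 2 → A × Fin 2 → Prop :=
  fun p q =>
    (p.2 = 0 ∧ q.2 = 0 ∧ lt p.1 q.1) ∨
    (p.1 = q.1 ∧ p.2 = 0 ∧ q.2 = 1) ∨
    (p.2 = 1 ∧ q.2 = 1 ∧ lt p.1 q.1) ∨
    (p.2 = 1 ∧ q.2 = 0 ∧ lt q.1 p.1) ∨
    (p.2 = 0 ∧ q.2 = 1 ∧ lt q.1 p.1)

/-- The tournament `U[C]` for an acyclic tournament `C = (A, lt)`. -/
def uRel {A : Type} (lt : A → A → Prop) : A × Fin 2 → A × Fin 2 → Prop :=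
  fun p q =>
    (p.2 = 0 ∧ q.2 = 0 ∧ lt p.1 q.1) ∨
    (p.1 = q.1 ∧ p.2 = 0 ∧ q.2 = 1) ∨
    (p.2 = 1 ∧ q.2 = 1 ∧ lt q.1 p.1) ∨
    (p.2 = 0 ∧ q.2 = 1 ∧ lt p.1 q.1) ∨
    (p.2 = 1 ∧ q.2 = 0 ∧ lt p.1 q.1)

/-- The tournament `H[C]` for an acyclic tournament `C = (A, lt)`. -/
def hRel {A : Type} (lt : A → A → Prop) : A × Fin 2 → A × Fin 2 → Prop :=
  fun p q =>
    (p.2 = 0 ∧ q.2 = 0 ∧ lt p.1 q.1) ∨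
    (p.1 = q.1 ∧ p.2 = 0 ∧ q.2 = 1) ∨
    (p.2 = 1 ∧ q.2 = 1 ∧ lt p.1 q.1) ∨
    (p.2 = 1 ∧ q.2 = 0 ∧ lt q.1 p.1) ∨
    (p.2 = 1 ∧ q.2 = 0 ∧ lt p.1 q.1)

/-- The tournament `K[C]` for an acyclic tournament `C = (A, lt)`. -/
def kRel {A : Type} (lt : A → A → Prop) : A × Fin 2 → A × Fin 2 → Prop :=
  fun p q =>
    (p.2 = 0 ∧ q.2 = 0 ∧ lt p.1 q.1) ∨
    (p.1 = q.1 ∧ p.2 = 0 ∧ q.2 = 1) ∨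
    (p.2 = 1 ∧ q.2 = 1 ∧ lt q.1 p.1) ∨
    (p.2 = 1 ∧ q.2 = 0 ∧ lt q.1 p.1) ∨
    (p.2 = 1 ∧ q.2 = 0 ∧ lt p.1 q.1)

def c3Tour (A : Type) (lt : A → A → Prop) : Tour := ⟨A × Fin 3, c3Rel lt⟩
def vTour (A : Type) (lt : A → A → Prop) : Tour := ⟨Option (A × Fin 2), vRel lt⟩
def tTour (A : Type) (lt : A → A → Prop) : Tour := ⟨A × Fin 2, tRel lt⟩
def uTour (A : Type) (lt : A → A → Prop) : Tour := ⟨A × Fin 2, uRel lt⟩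
def hTour (A : Type) (lt : A → A → Prop) : Tour := ⟨A × Fin 2, hRel lt⟩
def kTour (A : Type) (lt : A → A → Prop) : Tour := ⟨A × Fin 2, kRel lt⟩

/-- The order type `ω`: the natural numbers with the usual strict order. -/
def omegaLT : ℕ → ℕ → Prop := fun m n => m < n

/-- The order type `ω*`: the natural numbers with the reversed strict order. -/
def omegaStarLT : ℕ → ℕ → Prop := fun m n => n < m

/-- The set `𝔅` of twelve tournaments. -/
def frakB : List Tour :=
  [c3Tour ℕ omegaLT, vTour ℕ omegaLT, tTour ℕ omegaLT,
   uTour ℕ omegaLT, hTour ℕ omegaLT, kTour ℕ omegaLT,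
   c3Tour ℕ omegaStarLT, vTour ℕ omegaStarLT, tTour ℕ omegaStarLT,
   uTour ℕ omegaStarLT, hTour ℕ omegaStarLT, kTour ℕ omegaStarLT]

/-- The set `𝔅_{n̲}` of six tournaments built on the acyclic tournament `({0,…,n−1},<)`. -/
def frakBn (n : ℕ) : List Tour :=
  [c3Tour (Fin n) (· < ·), vTour (Fin n) (· < ·), tTour (Fin n) (· < ·),
   uTour (Fin n) (· < ·), hTour (Fin n) (· < ·), kTour (Fin n) (· < ·)]


/-!
Acyclic components are autonomous, acyclic and pairwise disjoint. If a finite set `S` meets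
every component, then the acyclic components of `T↾S` are exactly the traces `S ∩ C`, so the
multiset of the sizes `|S ∩ C|` is an isomorphism invariant of `T↾S`. Given a partition of
`n - p` into at most `k` parts, take one vertex in every component and distribute the parts as
extra vertices over the infinite components: distinct partitions yield non-isomorphic
subtournaments on `n` vertices.

For the growth rate, a function `Fin (k - 1) → Fin q` is encoded as `k - 1` parts lying in
disjoint intervals of length `q` together with one large part, giving `q ^ (k - 1) ≤ p_k(m)`
as soon as `m > (k - 1) k q`.
-/
section Components

variable {V : Type u} {r : V → V → Prop}

theorem IsTournament.rel_iff_of_autonomous {A : Set V} (hT : IsTournament r)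
    (hA : Autonomous r A) {x x' y : V} (hx : x ∈ A) (hx' : x' ∈ A) (hy : y ∉ A) :
    r y x ↔ r y x' := by
  rw [hT.2 y x (ne_of_mem_of_not_mem hx hy).symm, hT.2 y x' (ne_of_mem_of_not_mem hx' hy).symm]
  exact not_congr (hA x hx x' hx' y hy)

theorem Autonomous.mem_of_rel_of_rel {A : Set V} (hT : IsTournament r) (hA : Autonomous r A)
    {a b c : V} (ha : a ∈ A) (hb : b ∈ A) (hbc : r b c) (hca : r c a) : c ∈ A := by
  by_contra hc
  have hac : r a c := (hA b hb a ha c hc).mp hbc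
  exact (hT.2 a c (ne_of_mem_of_not_mem ha hc)).mp hac hca

theorem Autonomous.union {A B : Set V} (hA : Autonomous r A) (hB : Autonomous r B) {x : V}
    (hxA : x ∈ A) (hxB : x ∈ B) : Autonomous r (A ∪ B) := by
  have key : ∀ u ∈ A ∪ B, ∀ y ∉ A ∪ B, r u y ↔ r x y := by
    rintro u (hu | hu) y hy
    · exact hA u hu x hxA y fun h => hy (Or.inl h)
    · exact hB u hu x hxB y fun h => hy (Or.inr h)
  intro u hu u' hu' y hy
  rw [key u hu y hy, key u' hu' y hy]

theorem IsTournament.acyclicSet_union {A B : Set V} (hT : IsTournament r)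
    (hA : Autonomous r A) (hB : Autonomous r B) (hAc : AcyclicSet r A) (hBc : AcyclicSet r B) :
    AcyclicSet r (A ∪ B) := by
  rintro ⟨a, ha, b, hb, c, hc, hab, hbc, hca⟩
  have two_in : ∀ X, Autonomous r X → AcyclicSet r X →
      ¬ (a ∈ X ∧ b ∈ X ∨ b ∈ X ∧ c ∈ X ∨ c ∈ X ∧ a ∈ X) := by
    rintro X hX hXc (⟨ha, hb⟩ | ⟨hb, hc⟩ | ⟨hc, ha⟩)
    · exact hXc ⟨a, ha, b, hb, c, hX.mem_of_rel_of_rel hT ha hb hbc hca, hab, hbc, hca⟩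
    · exact hXc ⟨a, hX.mem_of_rel_of_rel hT hb hc hca hab, b, hb, c, hc, hab, hbc, hca⟩
    · exact hXc ⟨a, ha, b, hX.mem_of_rel_of_rel hT hc ha hab hbc, c, hc, hab, hbc, hca⟩
  have := two_in A hA hAc
  have := two_in B hB hBc
  rcases ha with ha | ha <;> rcases hb with hb | hb <;> rcases hc with hc | hc <;> tauto

theorem IsTournament.mem_acyclicComponent_self (hT : IsTournament r) (x : V) :
    x ∈ acyclicComponent r x :=
  ⟨{x}, ⟨rfl, fun _ ha _ ha' _ _ => by rw [ha, ha'],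
    fun ⟨_, ha, _, hb, _, _, hab, _, _⟩ => hT.1 _ (ha ▸ hb ▸ hab)⟩, rfl⟩

theorem subset_acyclicComponent {A : Set V} {x : V} (hx : x ∈ A) (hA : Autonomous r A)
    (hAc : AcyclicSet r A) : A ⊆ acyclicComponent r x :=
  fun _ hy => ⟨A, ⟨hx, hA, hAc⟩, hy⟩

theorem autonomous_acyclicComponent (x : V) : Autonomous r (acyclicComponent r x) := by
  rintro u ⟨A, ⟨hxA, hA, hAc⟩, huA⟩ u' ⟨A', ⟨hxA', hA', hA'c⟩, hu'A'⟩ y hy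
  rw [hA u huA x hxA y fun h => hy (subset_acyclicComponent hxA hA hAc h),
    hA' u' hu'A' x hxA' y fun h => hy (subset_acyclicComponent hxA' hA' hA'c h)]

theorem IsTournament.acyclicSet_acyclicComponent (hT : IsTournament r) (x : V) :
    AcyclicSet r (acyclicComponent r x) := by
  rintro ⟨a, ⟨A, ⟨hxA, hA, hAc⟩, haA⟩, b, ⟨B, ⟨hxB, hB, hBc⟩, hbB⟩,
    c, ⟨C, ⟨hxC, hC, hCc⟩, hcC⟩, hab, hbc, hca⟩
  have hBC := hT.acyclicSet_union hB hC hBc hCc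
  refine hT.acyclicSet_union hA (hB.union hC hxB hxC) hAc hBC
    ⟨a, .inl haA, b, .inr (.inl hbB), c, .inr (.inr hcC), hab, hbc, hca⟩

theorem IsTournament.acyclicComponent_eq_of_mem (hT : IsTournament r) {x y : V}
    (h : y ∈ acyclicComponent r x) : acyclicComponent r y = acyclicComponent r x := by
  have hxy : acyclicComponent r x ⊆ acyclicComponent r y :=
    subset_acyclicComponent h (autonomous_acyclicComponent x) (hT.acyclicSet_acyclicComponent x)
  exact (subset_acyclicComponent (hxy (hT.mem_acyclicComponent_self x))
    (autonomous_acyclicComponent y) (hT.acyclicSet_acyclicComponent y)).antisymm hxy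

theorem IsTournament.mem_acyclicComponent_comm (hT : IsTournament r) {x y : V} :
    y ∈ acyclicComponent r x ↔ x ∈ acyclicComponent r y :=
  ⟨fun h => hT.acyclicComponent_eq_of_mem h ▸ hT.mem_acyclicComponent_self x,
    fun h => hT.acyclicComponent_eq_of_mem h ▸ hT.mem_acyclicComponent_self y⟩

theorem IsAcyclicComponent.eq_acyclicComponent {C : Set V} (hT : IsTournament r)
    (hC : IsAcyclicComponent r C) {x : V} (hx : x ∈ C) : C = acyclicComponent r x := by
  obtain ⟨z, rfl⟩ := hC
  exact (hT.acyclicComponent_eq_of_mem hx).symm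

theorem IsTournament.rel_iff_of_notMem_acyclicComponent (hT : IsTournament r) {b c u v : V}
    (hcb : c ∉ acyclicComponent r b) (hu : u ∈ acyclicComponent r b)
    (hv : v ∈ acyclicComponent r c) : r u v ↔ r b c := by
  have hvb : v ∉ acyclicComponent r b := fun h =>
    hcb (hT.acyclicComponent_eq_of_mem h ▸ hT.acyclicComponent_eq_of_mem hv ▸
      hT.mem_acyclicComponent_self c)
  rw [autonomous_acyclicComponent b u hu b (hT.mem_acyclicComponent_self b) v hvb]
  exact hT.rel_iff_of_autonomous (autonomous_acyclicComponent c) hv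
    (hT.mem_acyclicComponent_self c) (mt hT.mem_acyclicComponent_comm.mp hcb)

theorem IsTournament.not_cycle_of_mem_acyclicComponent (hT : IsTournament r) {x a b c : V}
    (ha : a ∈ acyclicComponent r x) (hb : b ∈ acyclicComponent r x)
    (hab : r a b) (hbc : r b c) (hca : r c a) : False :=
  hT.acyclicSet_acyclicComponent x ⟨a, ha, b, hb, c,
    (autonomous_acyclicComponent x).mem_of_rel_of_rel hT ha hb hbc hca, hab, hbc, hca⟩

end Components

section Transport

variable {α β : Type*} {r : α → α → Prop} {s : β → β → Prop}

theorem Autonomous.preimage {A : Set β} (f : r ↪r s) (hA : Autonomous s A) :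
    Autonomous r (f ⁻¹' A) := fun x hx x' hx' y hy => by
  rw [← f.map_rel_iff, ← f.map_rel_iff]
  exact hA _ hx _ hx' _ hy

theorem AcyclicSet.preimage {A : Set β} (f : r →r s) (hA : AcyclicSet s A) :
    AcyclicSet r (f ⁻¹' A) := fun ⟨a, ha, b, hb, c, hc, hab, hbc, hca⟩ =>
  hA ⟨f a, ha, f b, hb, f c, hc, f.map_rel hab, f.map_rel hbc, f.map_rel hca⟩

theorem RelEmbedding.preimage_acyclicComponent_subset (f : r ↪r s) (x : α) :
    f ⁻¹' acyclicComponent s (f x) ⊆ acyclicComponent r x := by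
  rintro y ⟨A, ⟨hxA, hA, hAc⟩, hyA⟩
  exact ⟨f ⁻¹' A, ⟨hxA, hA.preimage f, hAc.preimage f.toRelHom⟩, hyA⟩

theorem RelIso.apply_mem_acyclicComponent_iff (e : r ≃r s) {x y : α} :
    e y ∈ acyclicComponent s (e x) ↔ y ∈ acyclicComponent r x := by
  refine ⟨fun h => e.toRelEmbedding.preimage_acyclicComponent_subset x h, fun h => ?_⟩
  apply e.symm.toRelEmbedding.preimage_acyclicComponent_subset (e x)
  simpa using h

end Transport

section Restriction

variable {V : Type u} {r : V → V → Prop} {p : V → Prop}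

theorem IsTournament.acyclicComponent_subrel (hT : IsTournament r)
    (hp : ∀ x, ∃ z, p z ∧ z ∈ acyclicComponent r x) (x : Subtype p) :
    acyclicComponent (Subrel r p) x = Subtype.val ⁻¹' acyclicComponent r x.1 := by
  refine Set.Subset.antisymm ?_ ((Subrel.relEmbedding r p).preimage_acyclicComponent_subset x)
  rintro y ⟨B, ⟨hxB, hB, hBc⟩, hyB⟩
  let U := {v | ∃ b ∈ B, v ∈ acyclicComponent r b.1}
  suffices U ⊆ acyclicComponent r x.1 from this ⟨y, hyB, hT.mem_acyclicComponent_self _⟩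
  refine subset_acyclicComponent ⟨x, hxB, hT.mem_acyclicComponent_self _⟩ ?_ ?_
  · rintro u ⟨b₁, hb₁, hu⟩ u' ⟨b₂, hb₂, hu'⟩ v hv
    -- compare the edges towards `v` with those towards a vertex `z ∈ p` of its component
    obtain ⟨z, hz, hzv⟩ := hp v
    have hzB : ⟨z, hz⟩ ∉ B := fun h => hv ⟨_, h, hT.mem_acyclicComponent_comm.mp hzv⟩
    have toward_z : ∀ b ∈ B, ∀ u ∈ acyclicComponent r b.1, r u v ↔ r b.1 z := fun b hb u hu =>
      have hvb : v ∉ acyclicComponent r b.1 := fun h => hv ⟨b, hb, h⟩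
      (hT.rel_iff_of_notMem_acyclicComponent hvb hu (hT.mem_acyclicComponent_self v)).trans
        (hT.rel_iff_of_notMem_acyclicComponent hvb (hT.mem_acyclicComponent_self _) hzv).symm
    rw [toward_z b₁ hb₁ u hu, toward_z b₂ hb₂ u' hu']
    exact hB b₁ hb₁ b₂ hb₂ _ hzB
  · rintro ⟨u₁, ⟨b₁, hb₁, hu₁⟩, u₂, ⟨b₂, hb₂, hu₂⟩, u₃, ⟨b₃, hb₃, hu₃⟩, h₁₂, h₂₃, h₃₁⟩
    have move : ∀ {b b' : Subtype p} {w : V}, b'.1 ∈ acyclicComponent r b.1 →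
        w ∈ acyclicComponent r b'.1 → w ∈ acyclicComponent r b.1 :=
      fun h hw => hT.acyclicComponent_eq_of_mem h ▸ hw
    by_cases e₁₂ : b₂.1 ∈ acyclicComponent r b₁.1
    · exact hT.not_cycle_of_mem_acyclicComponent hu₁ (move e₁₂ hu₂) h₁₂ h₂₃ h₃₁
    by_cases e₂₃ : b₃.1 ∈ acyclicComponent r b₂.1
    · exact hT.not_cycle_of_mem_acyclicComponent hu₂ (move e₂₃ hu₃) h₂₃ h₃₁ h₁₂
    by_cases e₃₁ : b₁.1 ∈ acyclicComponent r b₃.1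
    · exact hT.not_cycle_of_mem_acyclicComponent hu₃ (move e₃₁ hu₁) h₃₁ h₁₂ h₂₃
    exact hBc ⟨b₁, hb₁, b₂, hb₂, b₃, hb₃,
      (hT.rel_iff_of_notMem_acyclicComponent e₁₂ hu₁ hu₂).mp h₁₂,
      (hT.rel_iff_of_notMem_acyclicComponent e₂₃ hu₂ hu₃).mp h₂₃,
      (hT.rel_iff_of_notMem_acyclicComponent e₃₁ hu₃ hu₁).mp h₃₁⟩

end Restriction

section Blocks

variable {V : Type u} {r : V → V → Prop}

noncomputable def blockSizes (𝒞 : Finset (Set V)) (s : Set V) : Multiset ℕ :=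
  𝒞.val.map fun C => (s ∩ C).ncard

variable {s t : Set V}

theorem IsTournament.mem_acyclicComponent_relIso_iff (hT : IsTournament r)
    (hs : ∀ x, ∃ z ∈ s, z ∈ acyclicComponent r x) (ht : ∀ x, ∃ z ∈ t, z ∈ acyclicComponent r x)
    (e : Subrel r (· ∈ s) ≃r Subrel r (· ∈ t)) (x y : s) :
    (e y).1 ∈ acyclicComponent r (e x).1 ↔ y.1 ∈ acyclicComponent r x.1 := by
  have h := e.apply_mem_acyclicComponent_iff (x := x) (y := y)
  rwa [hT.acyclicComponent_subrel ht, hT.acyclicComponent_subrel hs] at h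

theorem IsTournament.ncard_inter_acyclicComponent_relIso (hT : IsTournament r)
    (hs : ∀ x, ∃ z ∈ s, z ∈ acyclicComponent r x) (ht : ∀ x, ∃ z ∈ t, z ∈ acyclicComponent r x)
    (e : Subrel r (· ∈ s) ≃r Subrel r (· ∈ t)) (x : s) :
    (t ∩ acyclicComponent r (e x).1).ncard = (s ∩ acyclicComponent r x.1).ncard := by
  have hiff := hT.mem_acyclicComponent_relIso_iff hs ht e x
  refine Set.ncard_congr (fun a ha => (e.symm ⟨a, ha.1⟩).1) (fun a ha => ⟨(e.symm ⟨a, ha.1⟩).2,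
    (hiff _).mp (by simpa using ha.2)⟩) (fun a b ha hb h => ?_) (fun b hb => ?_)
  · simpa using Subtype.ext h
  · exact ⟨(e ⟨b, hb.1⟩).1, ⟨(e ⟨b, hb.1⟩).2, (hiff _).mpr hb.2⟩, by simp⟩

theorem IsTournament.blockSizes_eq_of_relIso (hT : IsTournament r) {𝒞 : Finset (Set V)}
    (h𝒞 : ∀ C, C ∈ 𝒞 ↔ IsAcyclicComponent r C)
    (hs : ∀ x, ∃ z ∈ s, z ∈ acyclicComponent r x) (ht : ∀ x, ∃ z ∈ t, z ∈ acyclicComponent r x)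
    (e : Subrel r (· ∈ s) ≃r Subrel r (· ∈ t)) : blockSizes 𝒞 s = blockSizes 𝒞 t := by
  have hmeet : ∀ C ∈ 𝒞, ∃ z, z ∈ s ∧ z ∈ C := fun C hC => by
    obtain ⟨y, rfl⟩ := (h𝒞 C).mp hC
    exact hs y
  choose x hxs hxC using hmeet
  have hCx : ∀ C (hC : C ∈ 𝒞), C = acyclicComponent r (x C hC) :=
    fun C hC => ((h𝒞 C).mp hC).eq_acyclicComponent hT (hxC C hC)
  let i : ∀ C ∈ 𝒞, Set V := fun C hC => acyclicComponent r (e ⟨x C hC, hxs C hC⟩).1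
  have hi : ∀ C hC, i C hC ∈ 𝒞 := fun C hC => (h𝒞 _).mpr ⟨_, rfl⟩
  have i_inj : ∀ C₁ hC₁ C₂ hC₂, i C₁ hC₁ = i C₂ hC₂ → C₁ = C₂ := by
    intro C₁ hC₁ C₂ hC₂ h
    have h₂ : (e ⟨x C₂ hC₂, hxs C₂ hC₂⟩).1 ∈ i C₁ hC₁ := h ▸ hT.mem_acyclicComponent_self _
    rw [hCx C₁ hC₁, hCx C₂ hC₂, hT.acyclicComponent_eq_of_mem
      ((hT.mem_acyclicComponent_relIso_iff hs ht e _ _).mp h₂)]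
  refine Multiset.map_eq_map_of_bij_of_nodup _ _ 𝒞.nodup 𝒞.nodup i hi i_inj
    (fun D hD => ?_) (fun C hC => ?_)
  · obtain ⟨C, hC, h⟩ :=
      Finset.surj_on_of_inj_on_of_card_le i hi (fun _ _ _ _ => i_inj _ _ _ _) le_rfl D hD
    exact ⟨C, hC, h.symm⟩
  · conv_lhs => rw [hCx C hC]
    exact (hT.ncard_inter_acyclicComponent_relIso hs ht e ⟨x C hC, hxs C hC⟩).symm

end Blocks

theorem Finset.exists_map_val_eq_of_card_eq {α β : Type*} [DecidableEq α] [Zero β]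
    (s : Finset α) {ν : Multiset β} (h : ν.card = s.card) :
    ∃ f : α → β, s.val.map f = ν ∧ ∀ a ∉ s, f a = 0 := by
  classical
  induction s using Finset.induction_on generalizing ν with
  | empty => exact ⟨0, by simpa [eq_comm] using h, fun _ _ => rfl⟩
  | @insert a s ha ih =>
    obtain ⟨b, hb⟩ :=
      Multiset.card_pos_iff_exists_mem.mp (by rw [h, card_insert_of_notMem ha]; omega)
    obtain ⟨f, hf, hf0⟩ := ih (ν := ν.erase b) (by
      rw [Multiset.card_erase_of_mem hb, h, card_insert_of_notMem ha]; rfl)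
    refine ⟨Function.update f a b, ?_, fun x hx => ?_⟩
    · rw [insert_val_of_notMem ha, Multiset.map_cons, Function.update_self,
        Multiset.map_congr rfl fun x hx => Function.update_of_ne (ne_of_mem_of_not_mem hx ha) _ _,
        hf, Multiset.cons_erase hb]
    · rw [mem_insert, not_or] at hx
      rw [Function.update_of_ne hx.1, hf0 x hx.2]

theorem exists_finset_ncard_inter {V : Type*} {𝒞 : Finset (Set V)}
    (hdisj : (𝒞 : Set (Set V)).PairwiseDisjoint id) {g : Set V → ℕ}
    (hg : ∀ C ∈ 𝒞, ∃ t : Finset V, ↑t ⊆ C ∧ t.card = g C) :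
    ∃ S : Finset V, S.card = ∑ C ∈ 𝒞, g C ∧ ∀ C ∈ 𝒞, (↑S ∩ C).ncard = g C := by
  classical
  choose! t htC htg using hg
  have hdisj' : (𝒞 : Set (Set V)).PairwiseDisjoint t := fun C₁ h₁ C₂ h₂ hne => by
    rw [Function.onFun, ← Finset.disjoint_coe]
    exact (hdisj h₁ h₂ hne).mono (htC C₁ h₁) (htC C₂ h₂)
  have hinter : ∀ C ∈ 𝒞, (↑(𝒞.biUnion t) ∩ C : Set V) = ↑(t C) := fun C hC => by
    ext x
    simp only [Set.mem_inter_iff, Finset.coe_biUnion, Set.mem_iUnion, Finset.mem_coe,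
      exists_prop]
    refine ⟨fun ⟨⟨C', hC', hx⟩, hxC⟩ => ?_, fun hx => ⟨⟨C, hC, hx⟩, htC C hC hx⟩⟩
    by_contra hne
    exact Set.disjoint_left.mp (hdisj hC' hC fun h => hne (h ▸ hx)) (htC C' hC' hx) hxC
  refine ⟨𝒞.biUnion t, ?_, fun C hC => ?_⟩
  · rw [Finset.card_biUnion hdisj']
    exact Finset.sum_congr rfl htg
  · rw [hinter C hC, Set.ncard_coe_finset, htg C hC]

section Construction

variable {V : Type u} {r : V → V → Prop}

theorem IsTournament.pairwiseDisjoint_isAcyclicComponent (hT : IsTournament r) :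
    {C : Set V | IsAcyclicComponent r C}.PairwiseDisjoint id := fun _ h₁ _ h₂ hne =>
  Set.disjoint_left.mpr fun _ hx₁ hx₂ =>
    hne ((h₁.eq_acyclicComponent hT hx₁).trans (h₂.eq_acyclicComponent hT hx₂).symm)

theorem IsTournament.exists_finset_blockSizes (hT : IsTournament r) {𝒞 : Finset (Set V)}
    (h𝒞 : ∀ C, C ∈ 𝒞 ↔ IsAcyclicComponent r C) {k m : ℕ}
    (hk : Nat.card {C : Set V // IsAcyclicComponent r C ∧ C.Infinite} = k)
    (π : Nat.Partition m) (hπ : π.parts.card ≤ k) :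
    ∃ S : Finset V, S.card = m + 𝒞.card ∧ (∀ x, ∃ z ∈ (↑S : Set V), z ∈ acyclicComponent r x) ∧
      ((blockSizes 𝒞 ↑S).map (· - 1)).filter (· ≠ 0) = π.parts := by
  classical
  set ℐ := 𝒞.filter Set.Infinite
  have hℐ : ℐ.card = k := by
    have : (ℐ : Set (Set V)) = {C | IsAcyclicComponent r C ∧ C.Infinite} := by
      ext C
      simp [ℐ, h𝒞]
    rw [← hk, ← Set.ncard_coe_finset, this]
    exact (Nat.card_coe_set_eq _).symm
  -- the parts of `π`, padded with zeros, are distributed over the infinite components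
  let μ := π.parts + Multiset.replicate (k - π.parts.card) 0
  obtain ⟨f, hfμ, hf0⟩ := ℐ.exists_map_val_eq_of_card_eq (ν := μ) (by simp [μ, hℐ, hπ])
  have hfin : ∀ C ∈ 𝒞, ¬ C.Infinite → f C = 0 := fun C hC hCfin =>
    hf0 C fun h => hCfin (Finset.mem_filter.mp h).2
  obtain ⟨S, hScard, hSC⟩ := exists_finset_ncard_inter (g := fun C => f C + 1)
    (hT.pairwiseDisjoint_isAcyclicComponent.subset fun C hC => (h𝒞 C).mp hC) fun C hC => by
      by_cases hCinf : C.Infinite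
      · exact hCinf.exists_subset_card_eq _
      · obtain ⟨x, rfl⟩ := (h𝒞 C).mp hC
        exact ⟨{x}, by simpa using hT.mem_acyclicComponent_self x, by simp [hfin _ hC hCinf]⟩
  have hsum : ∑ C ∈ 𝒞, f C = m := by
    rw [← Finset.sum_filter_of_ne fun C hC hfC => not_not.mp fun h => hfC (hfin C hC h)]
    change (ℐ.val.map f).sum = m
    simp [hfμ, μ, π.parts_sum]
  refine ⟨S, by rw [hScard, Finset.sum_add_distrib, hsum, Finset.card_eq_sum_ones], fun x => ?_, ?_⟩
  · have hC := (h𝒞 (acyclicComponent r x)).mpr ⟨x, rfl⟩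
    obtain ⟨z, hzS, hzx⟩ :=
      Set.nonempty_of_ncard_ne_zero (s := ↑S ∩ acyclicComponent r x) (by rw [hSC _ hC]; omega)
    exact ⟨z, hzS, hzx⟩
  · have hblock : (blockSizes 𝒞 ↑S).map (· - 1) = 𝒞.val.map f := by
      rw [blockSizes, Multiset.map_map]
      exact Multiset.map_congr rfl fun C hC => by simp [hSC C hC]
    have hsupp : 𝒞.val.filter (fun C => f C ≠ 0) = ℐ.val.filter (fun C => f C ≠ 0) := by
      rw [Finset.filter_val, Multiset.filter_filter]
      exact Multiset.filter_congr fun C hC =>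
        ⟨fun h => ⟨h, not_not.mp fun hCinf => h (hfin C hC hCinf)⟩, And.left⟩
    rw [hblock]
    calc (𝒞.val.map f).filter (· ≠ 0) = (𝒞.val.filter (fun C => f C ≠ 0)).map f :=
          Multiset.filter_map _ _ _
      _ = (ℐ.val.map f).filter (· ≠ 0) := by
          rw [hsupp]
          exact (Multiset.filter_map (· ≠ 0) f _).symm
      _ = π.parts := by
        rw [hfμ, Multiset.filter_add, Multiset.filter_eq_self.mpr fun a ha => (π.parts_pos ha).ne',
          Multiset.filter_eq_nil.mpr fun a ha => by simp [Multiset.eq_of_mem_replicate ha],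
          add_zero]

end Construction

theorem Quot.finite_of_map_eq {α β : Type*} [Finite β] {ρ : α → α → Prop} (f : α → β)
    (hf : ∀ a b, f a = f b → ρ a b) : Finite (Quot ρ) := by
  refine Finite.of_surjective (fun b : Set.range f => Quot.mk ρ b.2.choose) fun q => ?_
  induction q using Quot.ind with
  | mk a => exact ⟨⟨f a, a, rfl⟩, Quot.sound (hf _ _ (Set.mem_range.mp ⟨a, rfl⟩).choose_spec)⟩

section Profile

variable {V : Type u} {r : V → V → Prop}

theorem equivalence_inducedIso (r : V → V → Prop) : Equivalence (InducedIso r) where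
  refl _ := ⟨Equiv.refl _, fun _ _ => Iff.rfl⟩
  symm := fun ⟨e, he⟩ => ⟨e.symm, fun a b => by simpa using (he (e.symm a) (e.symm b)).symm⟩
  trans := fun ⟨e, he⟩ ⟨e', he'⟩ => ⟨e.trans e', fun a b => (he a b).trans (he' (e a) (e b))⟩

theorem finite_quot_inducedIso (r : V → V → Prop) (n : ℕ) :
    Finite (Quot fun s t : {w : Finset V // w.card = n} => InducedIso r s.val t.val) := by
  -- a subtournament is determined up to isomorphism by its pullback to `Fin n`
  let e : ∀ s : {w : Finset V // w.card = n}, s.val ≃ Fin n := fun s => s.val.equivFinOfCardEq s.2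
  refine Quot.finite_of_map_eq (fun s (i j : Fin n) => r ((e s).symm i) ((e s).symm j))
    fun s t h => ⟨(e s).trans (e t).symm, fun a b => ?_⟩
  simpa using congrFun (congrFun h (e s a)) (e s b)

theorem IsTournament.card_partitions_le_profile (hT : IsTournament r)
    (hfin : {A : Set V | IsAcyclicComponent r A}.Finite) {p k : ℕ}
    (hp : Nat.card {A : Set V // IsAcyclicComponent r A} = p)
    (hk : Nat.card {A : Set V // IsAcyclicComponent r A ∧ A.Infinite} = k) {n : ℕ} (hn : p ≤ n) :
    Nat.card {π : Nat.Partition (n - p) // π.parts.card ≤ k} ≤ profile r n := by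
  set 𝒞 := hfin.toFinset
  have h𝒞 : ∀ C, C ∈ 𝒞 ↔ IsAcyclicComponent r C := fun C => hfin.mem_toFinset
  have h𝒞card : 𝒞.card = p := by
    rw [← hp, ← Set.ncard_eq_toFinset_card _ hfin]
    exact (Nat.card_coe_set_eq _).symm
  choose S hScard hSmeet hSparts using fun π : {π : Nat.Partition (n - p) // π.parts.card ≤ k} =>
    hT.exists_finset_blockSizes h𝒞 hk π.1 π.2
  have := finite_quot_inducedIso r n
  refine Nat.card_le_card_of_injective
    (fun π => Quot.mk _ ⟨S π, by rw [hScard, h𝒞card, Nat.sub_add_cancel hn]⟩) fun π π' h => ?_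
  obtain ⟨e, he⟩ := ((equivalence_inducedIso r).comap _).eqvGen_iff.mp (Quot.eqvGen_exact h)
  have hblocks := hT.blockSizes_eq_of_relIso h𝒞 (hSmeet π) (hSmeet π')
    ⟨e, fun {a b} => (he a b).symm⟩
  exact Subtype.ext (Nat.Partition.ext (by rw [← hSparts π, ← hSparts π', hblocks]))

end Profile

theorem pow_le_card_partitions {j q m : ℕ} (hm : (j * j + j) * q + 1 ≤ m) :
    q ^ j ≤ Nat.card {π : Nat.Partition m // π.parts.card ≤ j + 1} := by
  -- the `i`-th small part is `i * q + a i + 1`, which lies in the `i`-th block of length `q`;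
  -- one large part makes up the rest of `m`
  let c : (Fin j → Fin q) → Fin j → ℕ := fun a i => finProdFinEquiv (i, a i) + 1
  have hc : ∀ a i, c a i ≤ j * q := fun a i => (finProdFinEquiv (i, a i)).2
  have hbig : ∀ a, j * q < m - ∑ i, c a i := fun a => by
    have hsum : ∑ i, c a i ≤ j * (j * q) :=
      (Finset.sum_le_sum fun i _ => hc a i).trans (by simp)
    have : (j * j + j) * q = j * (j * q) + j * q := by ring
    omega
  let P : (Fin j → Fin q) → {π : Nat.Partition m // π.parts.card ≤ j + 1} := fun a =>
    ⟨{ parts := (m - ∑ i, c a i) ::ₘ Finset.univ.val.map (c a)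
       parts_pos := fun {x} hx => by
         rcases Multiset.mem_cons.mp hx with rfl | hx
         · exact (hbig a).trans_le' (Nat.zero_le _)
         · obtain ⟨i, -, rfl⟩ := Multiset.mem_map.mp hx
           exact Nat.succ_pos _
       parts_sum := by
         rw [Multiset.sum_cons]
         have := hbig a
         change _ + ∑ i, c a i = m
         omega }, by simp⟩
  refine (Nat.card_le_card_of_injective P fun a a' h => funext fun i => ?_).trans_eq' (by simp)
  have hmem : c a i ∈ (m - ∑ i, c a' i) ::ₘ Finset.univ.val.map (c a') := by
    change c a i ∈ (P a').1.parts
    rw [← h]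
    exact Multiset.mem_cons_of_mem (Multiset.mem_map_of_mem _ (Finset.mem_univ_val i))
  rcases Multiset.mem_cons.mp hmem with hbig' | hsmall
  · exact absurd (hbig a') (by rw [← hbig']; exact not_lt.mpr (hc a i))
  · obtain ⟨i', -, hi'⟩ := Multiset.mem_map.mp hsmall
    have := finProdFinEquiv.injective (Fin.ext (Nat.succ_injective hi'))
    simp only [Prod.mk.injEq] at this
    obtain ⟨rfl, h⟩ := this
    exact h.symm

open Filter in
theorem eventually_pow_le_card_partitions (p j : ℕ) :
    ∃ b : ℝ, 0 < b ∧ ∀ᶠ n : ℕ in atTop,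
      b * (n : ℝ) ^ j ≤ Nat.card {π : Nat.Partition (n - p) // π.parts.card ≤ j + 1} := by
  set D := j * j + j + 1
  refine ⟨((2 * D : ℝ)⁻¹) ^ j, by positivity, ?_⟩
  filter_upwards [eventually_ge_atTop (2 * (p + D))] with n hn
  set q := (n - p) / D
  have hqD : D * q + (n - p) % D = n - p := Nat.div_add_mod _ _
  have hmod := Nat.mod_lt (n - p) (show 0 < D by omega)
  have hq : 1 ≤ q := (Nat.one_le_div_iff (by omega)).mpr (by omega)
  have hDq : D * q = (j * j + j) * q + q := by ring
  have hnq : (n : ℝ) ≤ 2 * D * q := by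
    rw [mul_assoc]
    exact_mod_cast (by omega : n ≤ 2 * (D * q))
  have hcount := pow_le_card_partitions (j := j) (q := q) (m := n - p) (by omega)
  calc ((2 * D : ℝ)⁻¹) ^ j * (n : ℝ) ^ j = ((2 * D : ℝ)⁻¹ * n) ^ j := (mul_pow _ _ _).symm
    _ ≤ (q : ℝ) ^ j := by
      gcongr
      rw [inv_mul_le_iff₀ (by positivity)]
      exact hnq
    _ ≤ _ := by exact_mod_cast hcount

open Filter in
/-- If a tournament `T` has exactly `p` acyclic components, of which
exactly `k` are infinite, then `φ_T(n) ≥ p_k(n−p)` for every `n ≥ p`, where `p_k(m)` is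
the number of partitions of `m` into at most `k` parts. In particular the growth of
`φ_T` is at least that of a polynomial of degree `k−1`. -/
theorem profile_ge_partitions {V : Type u} (r : V → V → Prop) (hT : IsTournament r)
    (p k : ℕ) (hfin : {A : Set V | IsAcyclicComponent r A}.Finite)
    (hp : Nat.card {A : Set V // IsAcyclicComponent r A} = p)
    (hk : Nat.card {A : Set V // IsAcyclicComponent r A ∧ A.Infinite} = k) :
    (∀ n : ℕ, p ≤ n →
      Nat.card {π : Nat.Partition (n - p) // π.parts.card ≤ k} ≤ profile r n) ∧
    (1 ≤ k →
      ∃ b : ℝ, 0 < b ∧ ∀ᶠ n : ℕ in atTop, b * (n : ℝ) ^ (k - 1) ≤ (profile r n : ℝ)) := by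
  have hbound := fun n (hn : p ≤ n) => hT.card_partitions_le_profile hfin hp hk hn
  refine ⟨hbound, fun hk1 => ?_⟩
  obtain ⟨b, hb, hev⟩ := eventually_pow_le_card_partitions p (k - 1)
  refine ⟨b, hb, ?_⟩
  filter_upwards [hev, eventually_ge_atTop p] with n hn hpn
  rw [Nat.sub_add_cancel hk1] at hn
  exact hn.trans (by exact_mod_cast hbound n hpn)
end

section
/- The union of two acyclic autonomous subsets of a tournament is acyclic. -/
universe u v

lemma two_in_one_out {V : Type u} {r : V → V → Prop} (hT : IsTournament r)
    {S : Set V} (hS : Autonomous r S) {a b c : V} (ha : a ∈ S) (hb : b ∈ S)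
    (hc : c ∉ S) (h1 : r a b) (h2 : r b c) (h3 : r c a) : False := by
  have hac : a ≠ c := fun h => hc (h ▸ ha)
  have hrac : r a c := (hS a ha b hb c hc).mpr h2
  exact (hT.2 a c hac).mp hrac h3

/-- The union of two acyclic autonomous subsets of a tournament is
acyclic. -/
theorem union_acyclic_autonomous {V : Type u} (r : V → V → Prop) (hT : IsTournament r)
    (A B : Set V) (hAaut : Autonomous r A) (hAacy : AcyclicSet r A)
    (hBaut : Autonomous r B) (hBacy : AcyclicSet r B) :
    AcyclicSet r (A ∪ B) := by
  rintro ⟨a, ha, b, hb, c, hc, hab, hbc, hca⟩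
  by_cases haA : a ∈ A <;> by_cases hbA : b ∈ A <;> by_cases hcA : c ∈ A
  · exact hAacy ⟨a, haA, b, hbA, c, hcA, hab, hbc, hca⟩
  · exact two_in_one_out hT hAaut haA hbA hcA hab hbc hca
  · exact two_in_one_out hT hAaut hcA haA hbA hca hab hbc
  · have hbB : b ∈ B := hb.resolve_left hbA
    have hcB : c ∈ B := hc.resolve_left hcA
    by_cases haB : a ∈ B
    · exact hBacy ⟨a, haB, b, hbB, c, hcB, hab, hbc, hca⟩
    · exact two_in_one_out hT hBaut hbB hcB haB hbc hca hab
  · exact two_in_one_out hT hAaut hbA hcA haA hbc hca hab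
  · have haB : a ∈ B := ha.resolve_left haA
    have hcB : c ∈ B := hc.resolve_left hcA
    by_cases hbB : b ∈ B
    · exact hBacy ⟨a, haB, b, hbB, c, hcB, hab, hbc, hca⟩
    · exact two_in_one_out hT hBaut hcB haB hbB hca hab hbc
  · have haB : a ∈ B := ha.resolve_left haA
    have hbB : b ∈ B := hb.resolve_left hbA
    by_cases hcB : c ∈ B
    · exact hBacy ⟨a, haB, b, hbB, c, hcB, hab, hbc, hca⟩
    · exact two_in_one_out hT hBaut haB hbB hcB hab hbc hca
  · exact hBacy ⟨a, ha.resolve_left haA, b, hb.resolve_left hbA, c, hc.resolve_left hcA, hab, hbc, hca⟩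
end

section
/- Let T be a tournament and x a vertex of T. Then the union of all acyclic autonomous subsets of T containing x is itself an acyclic autonomous subset of T, and hence is the largest acyclic autonomous subset of T containing x. -/
universe u v

lemma cycle_closure {V : Type u} {r : V → V → Prop} (hT : IsTournament r)
    {A : Set V} (hA : Autonomous r A) {a b c : V} (hab : r a b) (hbc : r b c)
    (hca : r c a) (ha : a ∈ A) (hb : b ∈ A) : c ∈ A := by
  by_contra hc
  have hne : c ≠ a := fun h => hT.1 a (h ▸ hca)
  have : r a c ↔ r b c := hA a ha b hb c hc
  have hac : r a c := this.mpr hbc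
  exact ((hT.2 c a hne).mp hca) hac

lemma union_acyclic {V : Type u} {r : V → V → Prop} (hT : IsTournament r)
    {A B : Set V} {x : V} (hxA : x ∈ A) (hxB : x ∈ B)
    (hA : Autonomous r A) (hB : Autonomous r B)
    (hAa : AcyclicSet r A) (hBa : AcyclicSet r B) : AcyclicSet r (A ∪ B) := by
  rintro ⟨a, ha, b, hb, c, hc, hab, hbc, hca⟩
  -- if two of a,b,c lie in A then all do
  have keyA : ∀ S : Set V, Autonomous r S → AcyclicSet r S →
      a ∈ S ∨ b ∈ S ∨ c ∈ S → (a ∈ S ∧ b ∈ S) ∨ (b ∈ S ∧ c ∈ S) ∨ (c ∈ S ∧ a ∈ S) → False := by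
    intro S hS hSa _ h2
    rcases h2 with ⟨h1, h2⟩ | ⟨h1, h2⟩ | ⟨h1, h2⟩
    · exact hSa ⟨a, h1, b, h2, c, cycle_closure hT hS hab hbc hca h1 h2, hab, hbc, hca⟩
    · exact hSa ⟨b, h1, c, h2, a, cycle_closure hT hS hbc hca hab h1 h2, hbc, hca, hab⟩
    · exact hSa ⟨c, h1, a, h2, b, cycle_closure hT hS hca hab hbc h1 h2, hca, hab, hbc⟩
  rcases ha with ha | ha <;> rcases hb with hb | hb <;> rcases hc with hc | hc
  · exact keyA A hA hAa (Or.inl ha) (Or.inl ⟨ha, hb⟩)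
  · exact keyA A hA hAa (Or.inl ha) (Or.inl ⟨ha, hb⟩)
  · exact keyA A hA hAa (Or.inl ha) (Or.inr (Or.inr ⟨hc, ha⟩))
  · exact keyA B hB hBa (Or.inr (Or.inl hb)) (Or.inr (Or.inl ⟨hb, hc⟩))
  · exact keyA A hA hAa (Or.inr (Or.inl hb)) (Or.inr (Or.inl ⟨hb, hc⟩))
  · exact keyA B hB hBa (Or.inr (Or.inr hc)) (Or.inr (Or.inr ⟨hc, ha⟩))
  · exact keyA B hB hBa (Or.inl ha) (Or.inl ⟨ha, hb⟩)
  · exact keyA B hB hBa (Or.inl ha) (Or.inl ⟨ha, hb⟩)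

lemma union_autonomous {V : Type u} {r : V → V → Prop}
    {A B : Set V} {x : V} (hxA : x ∈ A) (hxB : x ∈ B)
    (hA : Autonomous r A) (hB : Autonomous r B) : Autonomous r (A ∪ B) := by
  have key : ∀ a ∈ A ∪ B, ∀ y ∉ A ∪ B, (r a y ↔ r x y) := by
    rintro a (ha | ha) y hy
    · exact hA a ha x hxA y (fun h => hy (Or.inl h))
    · exact hB a ha x hxB y (fun h => hy (Or.inr h))
  intro a ha b hb y hy
  exact (key a ha y hy).trans (key b hb y hy).symm

/-- The union of all acyclic autonomous subsets containing a vertex `x`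
is itself acyclic and autonomous, contains `x`, and is the largest acyclic autonomous
subset containing `x`. -/
theorem acyclicComponent_largest {V : Type u} (r : V → V → Prop) (hT : IsTournament r)
    (x : V) :
    x ∈ acyclicComponent r x ∧
    Autonomous r (acyclicComponent r x) ∧
    AcyclicSet r (acyclicComponent r x) ∧
    ∀ B : Set V, x ∈ B → Autonomous r B → AcyclicSet r B → B ⊆ acyclicComponent r x := by
  have hsingle : ({x} : Set V) ∈ {A : Set V | x ∈ A ∧ Autonomous r A ∧ AcyclicSet r A} := by
    refine ⟨rfl, ?_, ?_⟩
    · rintro a rfl b rfl y _; rfl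
    · rintro ⟨a, rfl, b, rfl, c, rfl, hab, _, _⟩; exact hT.1 _ hab
  refine ⟨⟨{x}, hsingle, rfl⟩, ?_, ?_, ?_⟩
  · -- autonomous
    have key : ∀ a ∈ acyclicComponent r x, ∀ y ∉ acyclicComponent r x, (r a y ↔ r x y) := by
      rintro a ⟨A, hA, ha⟩ y hy
      exact hA.2.1 a ha x hA.1 y (fun h => hy ⟨A, hA, h⟩)
    intro a ha b hb y hy
    exact (key a ha y hy).trans (key b hb y hy).symm
  · -- acyclic
    rintro ⟨a, ⟨A, hA, ha⟩, b, ⟨B, hB, hb⟩, c, ⟨C, hC, hc⟩, hab, hbc, hca⟩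
    have hAB : Autonomous r (A ∪ B) := union_autonomous hA.1 hB.1 hA.2.1 hB.2.1
    have hABa : AcyclicSet r (A ∪ B) :=
      union_acyclic hT hA.1 hB.1 hA.2.1 hB.2.1 hA.2.2 hB.2.2
    have hABC : AcyclicSet r (A ∪ B ∪ C) :=
      union_acyclic hT (Set.mem_union_left B hA.1) hC.1 hAB hC.2.1 hABa hC.2.2
    exact hABC ⟨a, Or.inl (Or.inl ha), b, Or.inl (Or.inr hb), c, Or.inr hc, hab, hbc, hca⟩
  · intro B hxB hBaut hBacy y hy
    exact ⟨B, ⟨hxB, hBaut, hBacy⟩, hy⟩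
end

section
/- Two vertices x, y of a tournament T belong to no common acyclic autonomous subset of T if and only if x ≠ y and either (1) x and y belong to a common 3-cycle of T, or (2) x and y belong to a common diamond of T, or (3) x and y are the two end-vertices of some self-dual double diamond of T. -/
universe u v

/-- `x` and `y` belong to a common 3-cycle of `r`. -/
def InThreeCycle {V : Type u} (r : V → V → Prop) (x y : V) : Prop :=
  ∃ a b c : V, r a b ∧ r b c ∧ r c a ∧ x ∈ ({a, b, c} : Set V) ∧ y ∈ ({a, b, c} : Set V)

/-- `x` and `y` belong to a common diamond of `r`: a 3-cycle `{a,b,c}` together with a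
further vertex `d` dominating or dominated by all of `a`, `b`, `c`. -/
def InDiamond {V : Type u} (r : V → V → Prop) (x y : V) : Prop :=
  ∃ a b c d : V, r a b ∧ r b c ∧ r c a ∧ d ∉ ({a, b, c} : Set V) ∧
    ((r a d ∧ r b d ∧ r c d) ∨ (r d a ∧ r d b ∧ r d c)) ∧
    x ∈ ({a, b, c, d} : Set V) ∧ y ∈ ({a, b, c, d} : Set V)

/-- `x` and `y` are the two end-vertices of a self-dual double diamond of `r`: a 3-cycle
`{a,b,c}` together with vertices `d, d'` such that `d' → z → d` for all `z ∈ {a,b,c}`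
and `d' → d`. -/
def EndsOfSelfDualDoubleDiamond {V : Type u} (r : V → V → Prop) (x y : V) : Prop :=
  ∃ a b c d d' : V, r a b ∧ r b c ∧ r c a ∧
    (r d' a ∧ r d' b ∧ r d' c) ∧ (r a d ∧ r b d ∧ r c d) ∧ r d' d ∧
    ((x = d ∧ y = d') ∨ (x = d' ∧ y = d))

section SepAux

variable {V : Type u} {r : V → V → Prop}

lemma sep_irrefl (hT : IsTournament r) (u : V) : ¬ r u u := hT.1 u

lemma sep_ne (hT : IsTournament r) {u v : V} (h : r u v) : u ≠ v := by
  rintro rfl; exact hT.1 u h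

lemma sep_asym (hT : IsTournament r) {u v : V} (h : r u v) : ¬ r v u :=
  (hT.2 u v (sep_ne hT h)).mp h

lemma sep_total (hT : IsTournament r) {u v : V} (hne : u ≠ v) (h : ¬ r u v) : r v u := by
  by_contra h2; exact h ((hT.2 u v hne).mpr h2)

/-- If two consecutive vertices of a 3-cycle lie in an autonomous acyclic set,
we get a contradiction. -/
lemma sep_cyc_two (hT : IsTournament r) {A : Set V} (hA : Autonomous r A)
    (hAc : AcyclicSet r A) {a b c : V}
    (hab : r a b) (hbc : r b c) (hca : r c a) (haA : a ∈ A) (hbA : b ∈ A) : False := by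
  by_cases hc : c ∈ A
  · exact hAc ⟨a, haA, b, hbA, c, hc, hab, hbc, hca⟩
  · exact sep_asym hT hca ((hA a haA b hbA c hc).mpr hbc)

/-- Two distinct members of a 3-cycle in an autonomous acyclic set: contradiction. -/
lemma sep_mem_cyc (hT : IsTournament r) {A : Set V} (hA : Autonomous r A)
    (hAc : AcyclicSet r A) {a b c x y : V}
    (hab : r a b) (hbc : r b c) (hca : r c a) (hne : x ≠ y)
    (hx : x ∈ ({a, b, c} : Set V)) (hy : y ∈ ({a, b, c} : Set V))
    (hxA : x ∈ A) (hyA : y ∈ A) : False := by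
  simp only [Set.mem_insert_iff, Set.mem_singleton_iff] at hx hy
  rcases hx with rfl | rfl | rfl <;> rcases hy with rfl | rfl | rfl <;>
  first
  | exact hne rfl
  | exact sep_cyc_two hT hA hAc hab hbc hca hxA hyA
  | exact sep_cyc_two hT hA hAc hab hbc hca hyA hxA
  | exact sep_cyc_two hT hA hAc hbc hca hab hxA hyA
  | exact sep_cyc_two hT hA hAc hbc hca hab hyA hxA
  | exact sep_cyc_two hT hA hAc hca hab hbc hxA hyA
  | exact sep_cyc_two hT hA hAc hca hab hbc hyA hxA

/-- Diamond, dominated case: `a ∈ A`, `d ∈ A`, all cycle vertices beat `d`. -/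
lemma sep_dia1 (hT : IsTournament r) {A : Set V} (hA : Autonomous r A)
    (hAc : AcyclicSet r A) {a b c d : V}
    (hab : r a b) (hbc : r b c) (hca : r c a)
    (had : r a d) (hbd : r b d) (hcd : r c d) (haA : a ∈ A) (hdA : d ∈ A) : False := by
  by_cases hb : b ∈ A
  · exact sep_cyc_two hT hA hAc hab hbc hca haA hb
  · exact sep_asym hT hbd ((hA a haA d hdA b hb).mp hab)

/-- Diamond, dominating case: `a ∈ A`, `d ∈ A`, `d` beats all cycle vertices. -/
lemma sep_dia2 (hT : IsTournament r) {A : Set V} (hA : Autonomous r A)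
    (hAc : AcyclicSet r A) {a b c d : V}
    (hab : r a b) (hbc : r b c) (hca : r c a)
    (hda : r d a) (hdb : r d b) (hdc : r d c) (haA : a ∈ A) (hdA : d ∈ A) : False := by
  by_cases hc : c ∈ A
  · exact sep_cyc_two hT hA hAc hca hab hbc hc haA
  · exact sep_asym hT hca ((hA a haA d hdA c hc).mpr hdc)

lemma sep_dia_mem (hT : IsTournament r) {A : Set V} (hA : Autonomous r A)
    (hAc : AcyclicSet r A) {a b c d z : V}
    (hab : r a b) (hbc : r b c) (hca : r c a)
    (hdom : (r a d ∧ r b d ∧ r c d) ∨ (r d a ∧ r d b ∧ r d c))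
    (hz : z ∈ ({a, b, c} : Set V)) (hzA : z ∈ A) (hdA : d ∈ A) : False := by
  simp only [Set.mem_insert_iff, Set.mem_singleton_iff] at hz
  rcases hz with rfl | rfl | rfl <;> rcases hdom with ⟨h1, h2, h3⟩ | ⟨h1, h2, h3⟩
  · exact sep_dia1 hT hA hAc hab hbc hca h1 h2 h3 hzA hdA
  · exact sep_dia2 hT hA hAc hab hbc hca h1 h2 h3 hzA hdA
  · exact sep_dia1 hT hA hAc hbc hca hab h2 h3 h1 hzA hdA
  · exact sep_dia2 hT hA hAc hbc hca hab h2 h3 h1 hzA hdA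
  · exact sep_dia1 hT hA hAc hca hab hbc h3 h1 h2 hzA hdA
  · exact sep_dia2 hT hA hAc hca hab hbc h3 h1 h2 hzA hdA

/-- Constructing an `InDiamond` witness with dominating vertex `x`. -/
lemma sep_mk_dia_dom (hT : IsTournament r) {x y a b c : V} (h2 : ¬ InDiamond r x y)
    (hab : r a b) (hbc : r b c) (hca : r c a)
    (hxa : r x a) (hxb : r x b) (hxc : r x c)
    (hy : y ∈ ({a, b, c} : Set V)) : False := by
  apply h2
  refine ⟨a, b, c, x, hab, hbc, hca, ?_, Or.inr ⟨hxa, hxb, hxc⟩, ?_, ?_⟩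
  · simp only [Set.mem_insert_iff, Set.mem_singleton_iff]
    push_neg
    exact ⟨fun h => hT.1 _ (h ▸ hxa), fun h => hT.1 _ (h ▸ hxb), fun h => hT.1 _ (h ▸ hxc)⟩
  · simp
  · simp only [Set.mem_insert_iff, Set.mem_singleton_iff] at hy ⊢; tauto

/-- Constructing an `InDiamond` witness with dominated vertex `y`. -/
lemma sep_mk_dia_domed (hT : IsTournament r) {x y a b c : V} (h2 : ¬ InDiamond r x y)
    (hab : r a b) (hbc : r b c) (hca : r c a)
    (hay : r a y) (hby : r b y) (hcy : r c y)
    (hx : x ∈ ({a, b, c} : Set V)) : False := by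
  apply h2
  refine ⟨a, b, c, y, hab, hbc, hca, ?_, Or.inl ⟨hay, hby, hcy⟩, ?_, ?_⟩
  · simp only [Set.mem_insert_iff, Set.mem_singleton_iff]
    push_neg
    refine ⟨fun h => hT.1 _ (h ▸ hay), fun h => hT.1 _ (h ▸ hby), fun h => hT.1 _ (h ▸ hcy)⟩
  · simp only [Set.mem_insert_iff, Set.mem_singleton_iff] at hx ⊢; tauto
  · simp

lemma sep_mk_sddd {x y a b c : V} (h3 : ¬ EndsOfSelfDualDoubleDiamond r x y)
    (hab : r a b) (hbc : r b c) (hca : r c a)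
    (hxa : r x a) (hxb : r x b) (hxc : r x c)
    (hay : r a y) (hby : r b y) (hcy : r c y) (hxy0 : r x y) : False :=
  h3 ⟨a, b, c, y, x, hab, hbc, hca, ⟨hxa, hxb, hxc⟩, ⟨hay, hby, hcy⟩, hxy0,
    Or.inr ⟨rfl, rfl⟩⟩

/-- Main construction: if `r x y` and none of the three configurations hold,
then the "interval" `{x, y} ∪ {z | x → z → y}` is an acyclic autonomous set
containing `x` and `y`. -/
lemma sep_exists (hT : IsTournament r) {x y : V} (hxy0 : r x y)
    (h1 : ¬ InThreeCycle r x y) (h2 : ¬ InDiamond r x y)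
    (h3 : ¬ EndsOfSelfDualDoubleDiamond r x y) :
    ∃ A : Set V, Autonomous r A ∧ AcyclicSet r A ∧ x ∈ A ∧ y ∈ A := by
  set A : Set V := insert x (insert y {z | r x z ∧ r z y}) with hAdef
  have hmem : ∀ u, u ∈ A ↔ u = x ∨ u = y ∨ (r x u ∧ r u y) := by
    intro u; simp [hAdef, Set.mem_insert_iff]
  have hxA : x ∈ A := (hmem x).2 (Or.inl rfl)
  have hyA : y ∈ A := (hmem y).2 (Or.inr (Or.inl rfl))
  -- claim 1: if w ∉ A and w → x, then w beats everything in A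
  have claim1 : ∀ w ∉ A, r w x → ∀ u ∈ A, r w u := by
    intro w hw hwx u hu
    have hwny : w ≠ y := fun h => hw (h ▸ hyA)
    rcases (hmem u).1 hu with h | h | ⟨hu1, hu2⟩
    · rw [h]; exact hwx
    · rw [h]
      by_contra hwy
      have hyw : r y w := sep_total hT hwny hwy
      exact h1 ⟨x, y, w, hxy0, hyw, hwx, by simp, by simp⟩
    · by_contra h'
      have hwnu : w ≠ u := fun h => hw (h ▸ hu)
      have huw : r u w := sep_total hT hwnu h'
      by_cases hwy : r w y
      · exact sep_mk_dia_domed hT h2 huw hwx hu1 hu2 hwy hxy0 (by simp)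
      · have hyw : r y w := sep_total hT hwny hwy
        exact h1 ⟨x, y, w, hxy0, hyw, hwx, by simp, by simp⟩
  -- claim 2: if w ∉ A and y → w, then everything in A beats w
  have claim2 : ∀ w ∉ A, r y w → ∀ u ∈ A, r u w := by
    intro w hw hyw u hu
    have hwnx : x ≠ w := fun h => hw (h ▸ hxA)
    rcases (hmem u).1 hu with h | h | ⟨hu1, hu2⟩
    · rw [h]
      by_contra hxw
      have hwx : r w x := sep_total hT hwnx hxw
      exact h1 ⟨x, y, w, hxy0, hyw, hwx, by simp, by simp⟩
    · rw [h]; exact hyw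
    · by_contra h'
      have hunw : u ≠ w := fun h => hw (h ▸ hu)
      have hwu : r w u := sep_total hT hunw h'
      by_cases hxw : r x w
      · exact sep_mk_dia_dom hT h2 hu2 hyw hwu hu1 hxy0 hxw (by simp)
      · have hwx : r w x := sep_total hT hwnx hxw
        exact h1 ⟨x, y, w, hxy0, hyw, hwx, by simp, by simp⟩
  refine ⟨A, ?_, ?_, hxA, hyA⟩
  · -- Autonomous
    intro u hu u' hu' w hw
    have hwmem := hw ∘ (hmem w).2
    have hwnx : x ≠ w := fun h => hw (h ▸ hxA)
    have hwny : w ≠ y := fun h => hw (h ▸ hyA)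
    by_cases hxw : r x w
    · -- then ¬ r w y, so y → w, claim2 applies
      have hwy : ¬ r w y := fun h => hwmem (Or.inr (Or.inr ⟨hxw, h⟩))
      have hyw : r y w := sep_total hT hwny hwy
      exact iff_of_true (claim2 w hw hyw u hu) (claim2 w hw hyw u' hu')
    · have hwx : r w x := sep_total hT hwnx hxw
      exact iff_of_false (sep_asym hT (claim1 w hw hwx u hu))
        (sep_asym hT (claim1 w hw hwx u' hu'))
  · -- Acyclic
    rintro ⟨a, haA, b, hbA, c, hcA, hab, hbc, hca⟩
    rcases (hmem a).1 haA with rfl | rfl | ⟨ha1, ha2⟩ <;>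
    rcases (hmem b).1 hbA with rfl | rfl | ⟨hb1, hb2⟩ <;>
    rcases (hmem c).1 hcA with rfl | rfl | ⟨hc1, hc2⟩ <;>
    first
    | exact hT.1 _ hab
    | exact hT.1 _ hbc
    | exact hT.1 _ hca
    | (refine h1 ⟨_, _, _, hab, hbc, hca, ?_, ?_⟩ <;>
        (simp only [Set.mem_insert_iff, Set.mem_singleton_iff]; tauto))
    | (refine sep_mk_dia_dom hT h2 hab hbc hca ?_ ?_ ?_ ?_ <;>
        first
        | assumption
        | (simp only [Set.mem_insert_iff, Set.mem_singleton_iff]; tauto))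
    | (refine sep_mk_dia_domed hT h2 hab hbc hca ?_ ?_ ?_ ?_ <;>
        first
        | assumption
        | (simp only [Set.mem_insert_iff, Set.mem_singleton_iff]; tauto))
    | exact sep_mk_sddd h3 hab hbc hca ha1 hb1 hc1 ha2 hb2 hc2 hxy0

end SepAux

/-- **separation lemma.** Two vertices `x, y` of a tournament belong to no
common acyclic autonomous subset iff `x ≠ y` and either they lie in a common 3-cycle, or
in a common diamond, or they are the end-vertices of a self-dual double diamond. -/
theorem separation_lemma {V : Type u} (r : V → V → Prop) (hT : IsTournament r) (x y : V) :
    (¬ ∃ A : Set V, Autonomous r A ∧ AcyclicSet r A ∧ x ∈ A ∧ y ∈ A) ↔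
    (x ≠ y ∧ (InThreeCycle r x y ∨ InDiamond r x y ∨
      EndsOfSelfDualDoubleDiamond r x y)) := by
  constructor
  · intro h
    have hne : x ≠ y := by
      rintro rfl
      apply h
      refine ⟨{x}, ?_, ?_, rfl, rfl⟩
      · rintro u rfl u' rfl w _; rfl
      · rintro ⟨a, rfl, b, rfl, c, rfl, hab, _, _⟩
        exact hT.1 _ hab
    refine ⟨hne, ?_⟩
    by_contra hcon
    push_neg at hcon
    obtain ⟨h1, h2, h3⟩ := hcon
    by_cases hxy0 : r x y
    · exact h (sep_exists hT hxy0 h1 h2 h3)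
    · have hyx0 : r y x := sep_total hT hne hxy0
      have h1' : ¬ InThreeCycle r y x := by
        rintro ⟨a, b, c, p, q, s, my, mx⟩
        exact h1 ⟨a, b, c, p, q, s, mx, my⟩
      have h2' : ¬ InDiamond r y x := by
        rintro ⟨a, b, c, d, p, q, s, hd, hdom, my, mx⟩
        exact h2 ⟨a, b, c, d, p, q, s, hd, hdom, mx, my⟩
      have h3' : ¬ EndsOfSelfDualDoubleDiamond r y x := by
        rintro ⟨a, b, c, d, d', p, q, s, hd', hd, hdd, hend⟩
        exact h3 ⟨a, b, c, d, d', p, q, s, hd', hd, hdd, by tauto⟩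
      obtain ⟨A, hA, hAc, hyA, hxA⟩ := sep_exists hT hyx0 h1' h2' h3'
      exact h ⟨A, hA, hAc, hxA, hyA⟩
  · rintro ⟨hne, hcase⟩ ⟨A, hA, hAc, hxA, hyA⟩
    rcases hcase with ⟨a, b, c, hab, hbc, hca, hx, hy⟩ |
      ⟨a, b, c, d, hab, hbc, hca, hd, hdom, hx, hy⟩ |
      ⟨a, b, c, d, d', hab, hbc, hca, ⟨hd'a, hd'b, hd'c⟩, ⟨had, hbd, hcd⟩, hd'd, hend⟩
    · exact sep_mem_cyc hT hA hAc hab hbc hca hne hx hy hxA hyA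
    · simp only [Set.mem_insert_iff, Set.mem_singleton_iff] at hx hy
      by_cases hxd : x = d
      · subst hxd
        have hy' : y ∈ ({a, b, c} : Set V) := by
          simp only [Set.mem_insert_iff, Set.mem_singleton_iff]
          rcases hy with h | h | h | h
          exacts [Or.inl h, Or.inr (Or.inl h), Or.inr (Or.inr h), absurd h.symm hne]
        exact sep_dia_mem hT hA hAc hab hbc hca hdom hy' hyA hxA
      · by_cases hyd : y = d
        · subst hyd
          have hx' : x ∈ ({a, b, c} : Set V) := by
            simp only [Set.mem_insert_iff, Set.mem_singleton_iff]
            rcases hx with h | h | h | h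
            exacts [Or.inl h, Or.inr (Or.inl h), Or.inr (Or.inr h), absurd h hxd]
          exact sep_dia_mem hT hA hAc hab hbc hca hdom hx' hxA hyA
        · have hx' : x ∈ ({a, b, c} : Set V) := by
            simp only [Set.mem_insert_iff, Set.mem_singleton_iff]
            rcases hx with h | h | h | h
            exacts [Or.inl h, Or.inr (Or.inl h), Or.inr (Or.inr h), absurd h hxd]
          have hy' : y ∈ ({a, b, c} : Set V) := by
            simp only [Set.mem_insert_iff, Set.mem_singleton_iff]
            rcases hy with h | h | h | h
            exacts [Or.inl h, Or.inr (Or.inl h), Or.inr (Or.inr h), absurd h hyd]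
          exact sep_mem_cyc hT hA hAc hab hbc hca hne hx' hy' hxA hyA
    · -- self-dual double diamond: d and d' both in A forces a, b, c in A
      have hdA : d ∈ A := by
        rcases hend with ⟨rfl, rfl⟩ | ⟨rfl, rfl⟩
        exacts [hxA, hyA]
      have hd'A : d' ∈ A := by
        rcases hend with ⟨rfl, rfl⟩ | ⟨rfl, rfl⟩
        exacts [hyA, hxA]
      have key : ∀ z, r d' z → r z d → z ∈ A := by
        intro z hz1 hz2
        by_contra hz
        exact sep_asym hT hz2 ((hA d' hd'A d hdA z hz).mp hz1)
      exact hAc ⟨a, key a hd'a had, b, key b hd'b hbd, c, key c hd'c hcd, hab, hbc, hca⟩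
end

section
/- Let T be a tournament and A a subset of V(T) which meets every acyclic component of T. Then the acyclic components of the subtournament T↾A are exactly the sets X ∩ A, where X ranges over the acyclic components of T. -/
universe u v

section ComponentsAux

variable {V : Type u} {r : V → V → Prop}

lemma singleton_autonomous (a : V) : Autonomous r {a} := by
  intro x hx x' hx' y _
  simp only [Set.mem_singleton_iff] at hx hx'
  subst hx; subst hx'
  exact Iff.rfl

lemma singleton_acyclicSet (hT : IsTournament r) (a : V) : AcyclicSet r {a} := by
  rintro ⟨p, hp, q, hq, c, hc, h1, _, _⟩
  simp only [Set.mem_singleton_iff] at hp hq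
  subst hp; subst hq
  exact hT.1 _ h1

lemma mem_self_component (hT : IsTournament r) (a : V) : a ∈ acyclicComponent r a :=
  ⟨{a}, ⟨rfl, singleton_autonomous a, singleton_acyclicSet hT a⟩, rfl⟩

lemma component_autonomous (a : V) : Autonomous r (acyclicComponent r a) := by
  intro x hx x' hx' y hy
  obtain ⟨C, ⟨haC, hCaut, hCac⟩, hxC⟩ := hx
  obtain ⟨C', ⟨haC', hC'aut, hC'ac⟩, hx'C⟩ := hx'
  have hyC : y ∉ C := fun h => hy ⟨C, ⟨haC, hCaut, hCac⟩, h⟩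
  have hyC' : y ∉ C' := fun h => hy ⟨C', ⟨haC', hC'aut, hC'ac⟩, h⟩
  exact (hCaut x hxC a haC y hyC).trans (hC'aut x' hx'C a haC' y hyC').symm

lemma component_acyclic (hT : IsTournament r) (a : V) :
    AcyclicSet r (acyclicComponent r a) := by
  rintro ⟨p, hp, q, hq, c, hc, h1, h2, h3⟩
  obtain ⟨C1, ⟨ha1, haut1, hac1⟩, hp1⟩ := hp
  obtain ⟨C2, ⟨ha2, haut2, hac2⟩, hq2⟩ := hq
  obtain ⟨C3, ⟨ha3, haut3, hac3⟩, hc3⟩ := hc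
  by_cases hcC1 : c ∈ C1
  · by_cases hqC1 : q ∈ C1
    · exact hac1 ⟨p, hp1, q, hqC1, c, hcC1, h1, h2, h3⟩
    · have hcq : r c q := (haut1 p hp1 c hcC1 q hqC1).1 h1
      have hne : q ≠ c := fun h => hqC1 (h ▸ hcC1)
      exact ((hT.2 q c hne).1 h2) hcq
  · by_cases hqC1 : q ∈ C1
    · have hpc : r p c := (haut1 q hqC1 p hp1 c hcC1).1 h2
      have hne : c ≠ p := fun h => hcC1 (h ▸ hp1)
      exact ((hT.2 c p hne).1 h3) hpc
    · have haq : r a q := (haut1 p hp1 a ha1 q hqC1).1 h1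
      have hnecp : c ≠ p := fun h => hcC1 (h ▸ hp1)
      have hneac : a ≠ c := fun h => hcC1 (h ▸ ha1)
      have hnpc : ¬ r p c := (hT.2 c p hnecp).1 h3
      have hnac : ¬ r a c := fun h => hnpc ((haut1 a ha1 p hp1 c hcC1).1 h)
      have hca : r c a := by
        by_contra h
        exact hnac ((hT.2 a c hneac).2 h)
      by_cases hcC2 : c ∈ C2
      · exact hac2 ⟨a, ha2, q, hq2, c, hcC2, haq, h2, hca⟩
      · have hac' : r a c := (haut2 q hq2 a ha2 c hcC2).1 h2
        exact hnac hac'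

lemma subset_component {C : Set V} (hC : Autonomous r C) (hAc : AcyclicSet r C)
    {x : V} (hx : x ∈ C) : C ⊆ acyclicComponent r x :=
  fun y hy => ⟨C, ⟨hx, hC, hAc⟩, hy⟩

lemma comp_eq_of_mem (hT : IsTournament r) {x a : V}
    (h : x ∈ acyclicComponent r a) : acyclicComponent r x = acyclicComponent r a := by
  have h1 : acyclicComponent r a ⊆ acyclicComponent r x :=
    subset_component (component_autonomous a) (component_acyclic hT a) h
  have hax : a ∈ acyclicComponent r x := h1 (mem_self_component hT a)
  exact Set.Subset.antisymm
    (subset_component (component_autonomous x) (component_acyclic hT x) hax) h1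

lemma not_mem_of_ne (hT : IsTournament r) {a b x : V}
    (hne : acyclicComponent r a ≠ acyclicComponent r b)
    (hx : x ∈ acyclicComponent r a) : x ∉ acyclicComponent r b :=
  fun h => hne ((comp_eq_of_mem hT hx).symm.trans (comp_eq_of_mem hT h))

lemma cross_comp (hT : IsTournament r) {a b x y : V}
    (hx : x ∈ acyclicComponent r a) (hy : y ∈ acyclicComponent r b)
    (hne : acyclicComponent r a ≠ acyclicComponent r b) : r x y ↔ r a b := by
  have hxB : x ∉ acyclicComponent r b := not_mem_of_ne hT hne hx
  have hbA : b ∉ acyclicComponent r a :=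
    not_mem_of_ne hT hne.symm (mem_self_component hT b)
  have h1 : r x y ↔ r x b := by
    have hy' := component_autonomous b y hy b (mem_self_component hT b) x hxB
    have hne1 : x ≠ y := fun h => hxB (h ▸ hy)
    have hne2 : x ≠ b := fun h => hxB (h ▸ mem_self_component hT b)
    rw [hT.2 x y hne1, hT.2 x b hne2, hy']
  exact h1.trans (component_autonomous a x hx a (mem_self_component hT a) b hbA)

lemma restrict_component (hT : IsTournament r)
    {A : Set V} (hmeet : ∀ x : V, (acyclicComponent r x ∩ A).Nonempty) (a : ↥A) :
    acyclicComponent (fun u v : ↥A => r u.val v.val) a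
      = Subtype.val ⁻¹' acyclicComponent r a.val := by
  set r' : ↥A → ↥A → Prop := fun u v => r u.val v.val with hr'
  have hT' : IsTournament r' := by
    refine ⟨fun u h => hT.1 u.val h, fun u v h => hT.2 u.val v.val ?_⟩
    exact fun hv => h (Subtype.ext hv)
  -- preimage is autonomous and acyclic in the restriction
  have hP_aut : Autonomous r' (Subtype.val ⁻¹' acyclicComponent r a.val) := by
    intro x hx x' hx' y hy
    exact component_autonomous a.val x.val hx x'.val hx' y.val hy
  have hP_ac : AcyclicSet r' (Subtype.val ⁻¹' acyclicComponent r a.val) := by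
    rintro ⟨p, hp, q, hq, c, hc, h1, h2, h3⟩
    exact component_acyclic hT a.val ⟨p.val, hp, q.val, hq, c.val, hc, h1, h2, h3⟩
  have hsub1 : Subtype.val ⁻¹' acyclicComponent r a.val ⊆ acyclicComponent r' a :=
    subset_component hP_aut hP_ac
      (show a.val ∈ acyclicComponent r a.val from mem_self_component hT a.val)
  -- the other inclusion, via the union of components of elements of B
  set B : Set ↥A := acyclicComponent r' a with hB
  have hBaut : Autonomous r' B := component_autonomous a
  have hBac : AcyclicSet r' B := component_acyclic hT' a
  have haB : a ∈ B := mem_self_component hT' a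
  set B' : Set V := {y | ∃ b : ↥A, b ∈ B ∧ y ∈ acyclicComponent r b.val} with hB'
  have haut : Autonomous r B' := by
    intro x hx x' hx' y hy
    obtain ⟨b1, hb1, hx1⟩ := hx
    obtain ⟨b2, hb2, hx2⟩ := hx'
    have hy1 : y ∉ acyclicComponent r b1.val := fun h => hy ⟨b1, hb1, h⟩
    have hy2 : y ∉ acyclicComponent r b2.val := fun h => hy ⟨b2, hb2, h⟩
    have e1 : r x y ↔ r b1.val y :=
      component_autonomous b1.val x hx1 b1.val (mem_self_component hT b1.val) y hy1
    have e2 : r x' y ↔ r b2.val y :=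
      component_autonomous b2.val x' hx2 b2.val (mem_self_component hT b2.val) y hy2
    suffices h : r b1.val y ↔ r b2.val y from e1.trans (h.trans e2.symm)
    by_cases hyA : y ∈ A
    · have hyB : (⟨y, hyA⟩ : ↥A) ∉ B := fun hmem =>
        hy ⟨⟨y, hyA⟩, hmem, mem_self_component hT y⟩
      exact hBaut b1 hb1 b2 hb2 ⟨y, hyA⟩ hyB
    · obtain ⟨a', ha'C, ha'A⟩ := hmeet y
      have hb1y : b1.val ∉ acyclicComponent r y := by
        intro h
        have heq := comp_eq_of_mem hT h
        exact hy1 (by rw [heq]; exact mem_self_component hT y)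
      have hb2y : b2.val ∉ acyclicComponent r y := by
        intro h
        have heq := comp_eq_of_mem hT h
        exact hy2 (by rw [heq]; exact mem_self_component hT y)
      have ha'B : (⟨a', ha'A⟩ : ↥A) ∉ B := by
        intro hmem
        have heq := comp_eq_of_mem hT ha'C
        exact hy ⟨⟨a', ha'A⟩, hmem,
          show y ∈ acyclicComponent r a' by rw [heq]; exact mem_self_component hT y⟩
      have eb1 : r b1.val y ↔ r b1.val a' := by
        have h := component_autonomous y y (mem_self_component hT y) a' ha'C b1.val hb1y
        have hne1 : b1.val ≠ y := fun h' => hb1y (h' ▸ mem_self_component hT y)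
        have hne2 : b1.val ≠ a' := fun h' => hb1y (h' ▸ ha'C)
        rw [hT.2 _ _ hne1, hT.2 _ _ hne2, h]
      have eb2 : r b2.val y ↔ r b2.val a' := by
        have h := component_autonomous y y (mem_self_component hT y) a' ha'C b2.val hb2y
        have hne1 : b2.val ≠ y := fun h' => hb2y (h' ▸ mem_self_component hT y)
        have hne2 : b2.val ≠ a' := fun h' => hb2y (h' ▸ ha'C)
        rw [hT.2 _ _ hne1, hT.2 _ _ hne2, h]
      exact eb1.trans ((hBaut b1 hb1 b2 hb2 ⟨a', ha'A⟩ ha'B).trans eb2.symm)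
  have hac : AcyclicSet r B' := by
    rintro ⟨x1, hx1, x2, hx2, x3, hx3, h12, h23, h31⟩
    obtain ⟨b1, hb1, hc1⟩ := hx1
    obtain ⟨b2, hb2, hc2⟩ := hx2
    obtain ⟨b3, hb3, hc3⟩ := hx3
    have e1 : acyclicComponent r x1 = acyclicComponent r b1.val := comp_eq_of_mem hT hc1
    have e2 : acyclicComponent r x2 = acyclicComponent r b2.val := comp_eq_of_mem hT hc2
    have e3 : acyclicComponent r x3 = acyclicComponent r b3.val := comp_eq_of_mem hT hc3
    by_cases h12' : acyclicComponent r x1 = acyclicComponent r x2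
    · by_cases h13' : acyclicComponent r x1 = acyclicComponent r x3
      · have m2 : x2 ∈ acyclicComponent r x1 := by
          rw [h12']; exact mem_self_component hT x2
        have m3 : x3 ∈ acyclicComponent r x1 := by
          rw [h13']; exact mem_self_component hT x3
        exact component_acyclic hT x1
          ⟨x1, mem_self_component hT x1, x2, m2, x3, m3, h12, h23, h31⟩
      · have m2 : x2 ∈ acyclicComponent r x1 := by
          rw [h12']; exact mem_self_component hT x2
        have hcr := cross_comp hT m2 (mem_self_component hT x3) h13'
        have hx13 : r x1 x3 := hcr.1 h23
        have hne : x1 ≠ x3 := fun h => h13' (by rw [h])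
        exact ((hT.2 x1 x3 hne).1 hx13) h31
    · by_cases h23' : acyclicComponent r x2 = acyclicComponent r x3
      · have m3 : x3 ∈ acyclicComponent r x2 := by
          rw [h23']; exact mem_self_component hT x3
        have hcr := cross_comp hT m3 (mem_self_component hT x1) (Ne.symm h12')
        have hx21 : r x2 x1 := hcr.1 h31
        have hne : x1 ≠ x2 := fun h => h12' (by rw [h])
        exact ((hT.2 x1 x2 hne).1 h12) hx21
      · by_cases h13' : acyclicComponent r x1 = acyclicComponent r x3
        · have m1 : x1 ∈ acyclicComponent r x3 := by
            rw [← h13']; exact mem_self_component hT x1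
          have hcr := cross_comp hT m1 (mem_self_component hT x2)
            (fun h => h12' (h13'.trans h))
          have hx32 : r x3 x2 := hcr.1 h12
          have hne : x2 ≠ x3 := fun h => h23' (by rw [h])
          exact ((hT.2 x2 x3 hne).1 h23) hx32
        · have r12 : r b1.val b2.val :=
            (cross_comp hT hc1 hc2 (by rw [← e1, ← e2]; exact h12')).1 h12
          have r23 : r b2.val b3.val :=
            (cross_comp hT hc2 hc3 (by rw [← e2, ← e3]; exact h23')).1 h23
          have r31 : r b3.val b1.val :=
            (cross_comp hT hc3 hc1 (by rw [← e3, ← e1]; exact (Ne.symm h13'))).1 h31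
          exact hBac ⟨b1, hb1, b2, hb2, b3, hb3, r12, r23, r31⟩
  have haB' : a.val ∈ B' := ⟨a, haB, mem_self_component hT a.val⟩
  have hsub2 : acyclicComponent r' a ⊆ Subtype.val ⁻¹' acyclicComponent r a.val := by
    intro b hb
    have hbB' : b.val ∈ B' := ⟨b, hb, mem_self_component hT b.val⟩
    exact subset_component haut hac haB' hbB'
  exact Set.Subset.antisymm hsub2 hsub1

end ComponentsAux

/-- If `A ⊆ V(T)` meets every acyclic component of a tournament `T`,
then the acyclic components of the induced subtournament `T↾A` are exactly the traces
`X ∩ A` of the acyclic components `X` of `T`. -/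
theorem components_of_restriction {V : Type u} (r : V → V → Prop) (hT : IsTournament r)
    (A : Set V) (hmeet : ∀ x : V, (acyclicComponent r x ∩ A).Nonempty) :
    {B : Set ↥A | ∃ a : ↥A, B = acyclicComponent (fun u v : ↥A => r u.val v.val) a} =
    {B : Set ↥A | ∃ X : Set V, IsAcyclicComponent r X ∧ B = Subtype.val ⁻¹' X} := by
  ext B
  simp only [Set.mem_setOf_eq]
  constructor
  · rintro ⟨a, rfl⟩
    exact ⟨acyclicComponent r a.val, ⟨a.val, rfl⟩, restrict_component hT hmeet a⟩
  · rintro ⟨X, ⟨x, rfl⟩, rfl⟩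
    obtain ⟨a', ha'C, ha'A⟩ := hmeet x
    exact ⟨⟨a', ha'A⟩,
      by rw [restrict_component hT hmeet ⟨a', ha'A⟩,
        show acyclicComponent r (⟨a', ha'A⟩ : ↥A).val = acyclicComponent r x from
          comp_eq_of_mem hT ha'C]⟩
end
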